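/- Let f = g·g' in F[x_1,…,x_n], let S ⊆ {1,…,n}, and suppose g' involves only the variables x_j with j ∉ S. Then for every exponent vector e ∈ ℕ^n with support contained in S and 1 ≤ |e| ≤ t, the coefficient of the monomial x^e in H_t(f) equals the coefficient of x^e in H_t(g) multiplied by g'(z), i.e., coeff_{x^e}(H_t(f)) = coeff_{x^e}(H_t(g)) · g'(z) in F[z]. -/

import Mathlib

noncomputable section

/-- The (total) degree of a monomial `m`, i.e. `|m| = ∑ i, m i`. -/
def mdeg {σ : Type*} (m : σ →₀ ℕ) : ℕ := m.sum fun _ e => e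

/-- Truncation of a multivariate polynomial keeping exactly the terms of total degree
between `1` and `t`. -/
def truncLE {σ A : Type*} [CommSemiring A] (t : ℕ) (p : MvPolynomial σ A) :
    MvPolynomial σ A :=
  ∑ m ∈ p.support.filter (fun m => 1 ≤ mdeg m ∧ mdeg m ≤ t),
    MvPolynomial.monomial m (MvPolynomial.coeff m p)

/-- `Ht t f` is `H_t(f)`: the truncation to degree at most `t` (in the variables `x`)
of `f(x + z) − f(z)`, viewed as an element of `F[z][x]`. -/
def Ht {n : ℕ} {A : Type*} [CommRing A] (t : ℕ) (f : MvPolynomial (Fin n) A) :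
    MvPolynomial (Fin n) (MvPolynomial (Fin n) A) :=
  truncLE t
    (MvPolynomial.eval₂ ((MvPolynomial.C).comp (MvPolynomial.C))
      (fun j => MvPolynomial.X j + MvPolynomial.C (MvPolynomial.X j)) f
      - MvPolynomial.C f)

/-!
For `e ≠ 0` in the degree window, the coefficient of `x^e` in `H_t(f)` is that of `f(x + z)`.
Translation is a ring map that creates no new variables, so `g'(x + z)` involves no `x_i` with
`e_i ≠ 0`; hence the coefficient of `x^e` in `g(x + z) · g'(x + z)` only sees the constant term
of `g'(x + z)`, which is `g'(z)`.
-/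

open MvPolynomial

namespace MvPolynomial

variable {σ R : Type*} [CommSemiring R]

theorem coeff_mul_eq_coeff_mul_constantCoeff {a b : MvPolynomial σ R} {e : σ →₀ ℕ}
    (he : ∀ i ∈ b.vars, e i = 0) : coeff e (a * b) = coeff e a * constantCoeff b := by
  classical
  rw [coeff_mul, Finset.sum_eq_single (e, 0)]
  · rfl
  · rintro ⟨c, d⟩ hcd hne
    rw [Finset.HasAntidiagonal.mem_antidiagonal] at hcd
    dsimp only at hcd ⊢
    have hd : d ≠ 0 := by rintro rfl; exact hne (by simp [← hcd])
    obtain ⟨i, hi⟩ := Finsupp.support_nonempty_iff.mpr hd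
    suffices coeff d b = 0 by rw [this, mul_zero]
    by_contra hb
    have hi_vars : i ∈ b.vars := (mem_vars_iff_mem_support i).mpr ⟨d, mem_support_iff.mpr hb, hi⟩
    have hde : d i ≤ e i := hcd ▸ le_add_self
    exact Finsupp.mem_support_iff.mp hi (Nat.eq_zero_of_le_zero (he i hi_vars ▸ hde))
  · simp

/-- `translate p` is `p(x + z)` as a polynomial in `x` over `R[z]`. -/
def translate : MvPolynomial σ R →+* MvPolynomial σ (MvPolynomial σ R) :=
  eval₂Hom (C.comp C) fun j => X j + C (X j)

theorem translate_eq_bind₁_map (p : MvPolynomial σ R) :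
    translate p = bind₁ (fun j => X j + C (X j)) (map C p) := by
  rw [← aeval_eq_bind₁, aeval_def, eval₂_map, algebraMap_eq]
  rfl

theorem vars_translate_subset (p : MvPolynomial σ R) : (translate p).vars ⊆ p.vars := by
  classical
  intro j hj
  rw [translate_eq_bind₁_map] at hj
  obtain ⟨i, hi, hji⟩ := mem_vars_bind₁ _ _ hj
  have hdeg : (X i + C (X i) : MvPolynomial σ (MvPolynomial σ R)).degrees ≤ {i} :=
    degrees_add_le.trans (sup_le (degrees_X' i) (by rw [degrees_C]; exact Multiset.zero_le _))
  rw [vars_def] at hji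
  obtain rfl : j = i := by simpa using Multiset.mem_of_le hdeg (Multiset.mem_toFinset.mp hji)
  exact vars_map p C hi

theorem constantCoeff_translate (p : MvPolynomial σ R) : constantCoeff (translate p) = p := by
  have hC : (constantCoeff (σ := σ) (R := MvPolynomial σ R)).comp (C.comp C) = C :=
    RingHom.ext fun r => by simp
  rw [translate, coe_eval₂Hom, eval₂_comp_left, hC]
  simp [Function.comp_def]

end MvPolynomial

theorem coeff_truncLE {σ A : Type*} [CommSemiring A] {t : ℕ} (p : MvPolynomial σ A)
    {e : σ →₀ ℕ} (h1 : 1 ≤ mdeg e) (h2 : mdeg e ≤ t) :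
    coeff e (truncLE t p) = coeff e p := by
  classical
  rw [truncLE, coeff_sum]
  simp only [coeff_monomial]
  rw [Finset.sum_ite_eq' _ e (fun m => coeff m p)]
  split_ifs with he
  · rfl
  · simp_all

theorem coeff_Ht {n : ℕ} {A : Type*} [CommRing A] {t : ℕ} (f : MvPolynomial (Fin n) A)
    {e : Fin n →₀ ℕ} (h1 : 1 ≤ mdeg e) (h2 : mdeg e ≤ t) :
    coeff e (Ht t f) = coeff e (translate f) := by
  have he : e ≠ 0 := by rintro rfl; simp [mdeg] at h1
  rw [Ht, coeff_truncLE _ h1 h2, coeff_sub, coeff_C, if_neg he.symm, sub_zero]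
  rfl

/-- Let `f = g·g'` in `F[x_1,…,x_n]` and suppose `g'` involves only variables `x_j`
with `j ∉ S`.  Then for every exponent vector `e` with support contained in `S` and
`1 ≤ |e| ≤ t`, the coefficient of `x^e` in `H_t(f)` equals the coefficient of `x^e`
in `H_t(g)` multiplied by `g'(z)` (as elements of `F[z]`; here `g'(z)` is `g'` with
each `x_j` replaced by `z_j`, i.e. `g'` itself viewed in the identically-indexed
coefficient ring). -/
theorem coeff_Ht_mul_of_disjoint (F : Type*) [Field F] (n t : ℕ)
    (g g' : MvPolynomial (Fin n) F) (S : Set (Fin n))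
    (hg' : g' ∈ MvPolynomial.supported F Sᶜ)
    (e : Fin n →₀ ℕ) (hsupp : ∀ i, e i ≠ 0 → i ∈ S)
    (h1 : 1 ≤ mdeg e) (h2 : mdeg e ≤ t) :
    MvPolynomial.coeff e (Ht t (g * g')) = MvPolynomial.coeff e (Ht t g) * g' := by
  rw [coeff_Ht _ h1 h2, coeff_Ht _ h1 h2, map_mul, coeff_mul_eq_coeff_mul_constantCoeff,
    constantCoeff_translate]
  intro i hi
  by_contra hei
  exact mem_supported.mp hg' (vars_translate_subset g' hi) (hsupp i hei)

end
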